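/- Let P be a simple polygon with diagonal set M_d, and let J ∈ NC[M_d] be a set of pairwise non-crossing diagonals. For I ⊆ J, the set I divides P into #I + 1 sub-polygons P_{I,1},…,P_{I,#I+1}. Then χ(M_d \ J) = Σ_{I ⊆ J} Π_{k=1}^{#I+1} χ(M_d(P_{I,k})), where M_d(Q) denotes the set of diagonals of a polygon Q. -/

import Mathlib

open scoped BigOperators Classical

/-- A simple polygon in the plane with `n` vertices in general position:
vertices are distinct, no three are collinear, non-adjacent edges are disjoint,
and consecutive edges meet only at their common vertex. -/
structure SimplePolygon (n : ℕ) [NeZero n] where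
  V : Fin n → ℝ × ℝ
  three_le : 3 ≤ n
  inj : Function.Injective V
  gen_pos : ∀ i j k : Fin n, i ≠ j → j ≠ k → i ≠ k →
    ¬ Collinear ℝ ({V i, V j, V k} : Set (ℝ × ℝ))
  simple : ∀ i j : Fin n, i ≠ j → i ≠ j + 1 → j ≠ i + 1 →
    segment ℝ (V i) (V (i + 1)) ∩ segment ℝ (V j) (V (j + 1)) = ∅
  consec : ∀ i : Fin n,
    segment ℝ (V i) (V (i + 1)) ∩ segment ℝ (V (i + 1)) (V (i + 1 + 1)) = {V (i + 1)}

namespace SimplePolygon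

variable {n : ℕ} [NeZero n] (P : SimplePolygon n)

/-- The boundary of the polygon: the union of its edges. -/
def boundary : Set (ℝ × ℝ) := ⋃ i : Fin n, segment ℝ (P.V i) (P.V (i + 1))

/-- The interior region: points off the boundary whose connected component of the
complement of the boundary is bounded. -/
def interiorRegion : Set (ℝ × ℝ) :=
  {x | x ∉ P.boundary ∧ Bornology.IsBounded (connectedComponentIn P.boundaryᶜ x)}

/-- The exterior region: points off the boundary whose connected component of the
complement of the boundary is unbounded. -/
def exteriorRegion : Set (ℝ × ℝ) :=
  {x | x ∉ P.boundary ∧ ¬ Bornology.IsBounded (connectedComponentIn P.boundaryᶜ x)}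

/-- The polygon is convex if its closed region (interior together with boundary) is convex. -/
def IsConvexPolygon : Prop := Convex ℝ (P.interiorRegion ∪ P.boundary)

/-- The open segment joining the two vertices of a chord candidate. -/
def chordSeg (p : Fin n × Fin n) : Set (ℝ × ℝ) := openSegment ℝ (P.V p.1) (P.V p.2)

/-- A chord: an (ordered, `p.1 < p.2`) pair of non-consecutive vertices. -/
def IsChord (p : Fin n × Fin n) : Prop := p.1 < p.2 ∧ p.2 ≠ p.1 + 1 ∧ p.1 ≠ p.2 + 1

/-- A diagonal: a chord lying in the interior of the polygon. -/
def IsDiagonal (p : Fin n × Fin n) : Prop := IsChord p ∧ P.chordSeg p ⊆ P.interiorRegion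

/-- An epigonal: a chord lying in the exterior of the polygon. -/
def IsEpigonal (p : Fin n × Fin n) : Prop := IsChord p ∧ P.chordSeg p ⊆ P.exteriorRegion

/-- The set of diagonals. -/
noncomputable def Mdiag : Finset (Fin n × Fin n) := Finset.univ.filter fun p => P.IsDiagonal p

/-- The set of epigonals. -/
noncomputable def Mepi : Finset (Fin n × Fin n) := Finset.univ.filter fun p => P.IsEpigonal p

/-- Two chords are non-crossing if their open segments are disjoint. -/
def NCr (p q : Fin n × Fin n) : Prop := Disjoint (P.chordSeg p) (P.chordSeg q)

/-- `fcount A i` is the number of `i`-element subsets of `A` that are pairwise non-crossing. -/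
noncomputable def fcount (A : Finset (Fin n × Fin n)) (i : ℕ) : ℕ :=
  (A.powerset.filter fun S : Finset (Fin n × Fin n) => S.card = i ∧ (S : Set (Fin n × Fin n)).Pairwise P.NCr).card

/-- The Euler characteristic `χ(A) = Σ (−1)^i f_i(A)`. -/
noncomputable def chi (A : Finset (Fin n × Fin n)) : ℤ :=
  ∑ i ∈ Finset.range (A.card + 1), (-1 : ℤ) ^ i * P.fcount A i

/-- The interior of the polygon with the open segments of the chords in `I` removed. -/
def cutRegion (I : Finset (Fin n × Fin n)) : Set (ℝ × ℝ) :=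
  P.interiorRegion \ ⋃ p ∈ I, P.chordSeg p

/-- The sub-polygon pieces into which `I` divides `P`: the connected components of
the interior with the segments of `I` removed. -/
def pieces (I : Finset (Fin n × Fin n)) : Set (Set (ℝ × ℝ)) :=
  {C | ∃ x ∈ P.cutRegion I, C = connectedComponentIn (P.cutRegion I) x}

/-- The diagonals of the sub-polygon corresponding to a piece `C`. -/
noncomputable def diagsIn (C : Set (ℝ × ℝ)) : Finset (Fin n × Fin n) :=
  P.Mdiag.filter fun p => P.chordSeg p ⊆ C

/-- `I` divides `P` into convex sub-polygons. -/
def ConvexPartition (I : Finset (Fin n × Fin n)) : Prop :=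
  ∀ C ∈ P.pieces I, Convex ℝ C

end SimplePolygon


/-!
Write `χ(A)` as the signed count `∑ (-1)^#S` over the non-crossing subsets `S ⊆ A`. For a
non-crossing `I`, the diagonals crossing no member of `I` are exactly the diagonals lying in the
pieces cut out by `I`, and diagonals lying in different pieces cannot cross; hence the product over
the pieces is the signed count of the non-crossing sets `T` of such diagonals. Via `T ↦ I ∪ T`
this is `(-1)^#I` times the signed count of the non-crossing sets `U ⊇ I` of diagonals. Summing
over `I ⊆ J` and exchanging the sums weights each `U` by `∑_{I ⊆ U ∩ J} (-1)^#I`, which is `1`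
if `U` avoids `J` and `0` otherwise.
-/

open Finset

section PairwiseEulerChar

variable {α : Type*} [DecidableEq α] (r : α → α → Prop)

noncomputable def pairwiseSubsets (A : Finset α) : Finset (Finset α) :=
  A.powerset.filter fun S : Finset α => (S : Set α).Pairwise r

noncomputable def pairwiseEulerChar (A : Finset α) : ℤ :=
  ∑ S ∈ pairwiseSubsets r A, (-1) ^ #S

variable {r}

@[simp]
theorem mem_pairwiseSubsets {A S : Finset α} :
    S ∈ pairwiseSubsets r A ↔ S ⊆ A ∧ (S : Set α).Pairwise r := by
  rw [pairwiseSubsets, mem_filter, mem_powerset]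

theorem pairwiseSubsets_sdiff (A B : Finset α) :
    pairwiseSubsets r (A \ B) = {U ∈ pairwiseSubsets r A | Disjoint U B} := by
  ext U
  simp only [mem_filter, mem_pairwiseSubsets, subset_sdiff]
  tauto

@[simp]
theorem pairwiseEulerChar_empty : pairwiseEulerChar r ∅ = 1 := by
  simp [pairwiseEulerChar, pairwiseSubsets, filter_singleton]

theorem pairwiseEulerChar_union {A B : Finset α} (hAB : Disjoint A B)
    (hr : ∀ a ∈ A, ∀ b ∈ B, r a b ∧ r b a) :
    pairwiseEulerChar r (A ∪ B) = pairwiseEulerChar r A * pairwiseEulerChar r B := by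
  rw [pairwiseEulerChar, pairwiseEulerChar, pairwiseEulerChar, sum_mul_sum, ← sum_product']
  refine sum_nbij' (fun S => (S ∩ A, S ∩ B)) (fun ST => ST.1 ∪ ST.2) ?_ ?_ ?_ ?_ ?_
  · intro S hS
    rw [mem_pairwiseSubsets] at hS
    simp only [mem_product, mem_pairwiseSubsets, inter_subset_right, true_and, coe_inter]
    exact ⟨hS.2.mono Set.inter_subset_left, hS.2.mono Set.inter_subset_left⟩
  · rintro ⟨S, T⟩ hST
    simp only [mem_product, mem_pairwiseSubsets] at hST
    simp only [mem_pairwiseSubsets, coe_union, Set.pairwise_union]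
    refine ⟨union_subset_union hST.1.1 hST.2.1, hST.1.2, hST.2.2, ?_⟩
    exact fun a ha b hb _ => hr a (hST.1.1 ha) b (hST.2.1 hb)
  · intro S hS
    rw [← inter_union_distrib_left, inter_eq_left.2 (mem_pairwiseSubsets.1 hS).1]
  · rintro ⟨S, T⟩ hST
    simp only [mem_product, mem_pairwiseSubsets] at hST
    simp only [union_inter_distrib_right, inter_eq_left.2 hST.1.1, inter_eq_left.2 hST.2.1,
      disjoint_iff_inter_eq_empty.1 (hAB.mono_left hST.1.1),
      disjoint_iff_inter_eq_empty.1 (hAB.symm.mono_left hST.2.1), union_empty, empty_union]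
  · intro S hS
    rw [← pow_add, ← card_union_of_disjoint (hAB.mono inter_subset_right inter_subset_right),
      ← inter_union_distrib_left, inter_eq_left.2 (mem_pairwiseSubsets.1 hS).1]

theorem pairwiseEulerChar_biUnion {β : Type*} {F : Finset β} {B : β → Finset α}
    (hdisj : (F : Set β).PairwiseDisjoint B)
    (hr : ∀ i ∈ F, ∀ j ∈ F, i ≠ j → ∀ a ∈ B i, ∀ b ∈ B j, r a b) :
    pairwiseEulerChar r (F.biUnion B) = ∏ i ∈ F, pairwiseEulerChar r (B i) := by
  induction F using Finset.induction_on with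
  | empty => simp
  | insert i F hi ih =>
    have hne : ∀ j ∈ F, i ≠ j := fun j hj h => hi (h ▸ hj)
    rw [biUnion_insert, prod_insert hi, pairwiseEulerChar_union, ih]
    · exact hdisj.subset (by simp)
    · exact fun k hk j hj => hr k (mem_insert_of_mem hk) j (mem_insert_of_mem hj)
    · exact disjoint_biUnion_right _ _ _ |>.2 fun j hj =>
        hdisj (by simp) (by simp [hj]) (hne j hj)
    · intro a ha b hb
      obtain ⟨j, hj, hbj⟩ := mem_biUnion.1 hb
      exact ⟨hr i (mem_insert_self i F) j (mem_insert_of_mem hj) (hne j hj) a ha b hbj,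
        hr j (mem_insert_of_mem hj) i (mem_insert_self i F) (hne j hj).symm b hbj a ha⟩

theorem pairwiseEulerChar_eq_prod_fiberwise {β : Type*} [DecidableEq β] {A : Finset α}
    (f : α → β) (hr : ∀ a ∈ A, ∀ b ∈ A, f a ≠ f b → r a b) :
    pairwiseEulerChar r A = ∏ y ∈ A.image f, pairwiseEulerChar r {a ∈ A | f a = y} := by
  conv_lhs => rw [← image_biUnion_filter_eq A f]
  refine pairwiseEulerChar_biUnion ?_ ?_
  · intro y _ z _ hyz
    exact disjoint_filter.2 fun a _ hy hz => hyz (hy.symm.trans hz)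
  · intro y _ z _ hyz a ha b hb
    rw [mem_filter] at ha hb
    exact hr a ha.1 b hb.1 (by rw [ha.2, hb.2]; exact hyz)

end PairwiseEulerChar

namespace SimplePolygon

variable {n : ℕ} [NeZero n] (P : SimplePolygon n)

theorem chi_eq_pairwiseEulerChar (A : Finset (Fin n × Fin n)) :
    P.chi A = pairwiseEulerChar P.NCr A := by
  have hcard : ∀ S ∈ pairwiseSubsets P.NCr A, #S ∈ range (#A + 1) := fun S hS =>
    mem_range_succ_iff.2 (card_le_card (mem_pairwiseSubsets.1 hS).1)
  rw [chi, pairwiseEulerChar, ← sum_fiberwise_of_maps_to hcard]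
  refine sum_congr rfl fun i _ => ?_
  rw [sum_congr rfl fun S hS => by rw [(mem_filter.1 hS).2], sum_const, nsmul_eq_mul, mul_comm,
    fcount, pairwiseSubsets, filter_filter]
  simp only [and_comm]

theorem midpoint_mem_chordSeg (p : Fin n × Fin n) :
    midpoint ℝ (P.V p.1) (P.V p.2) ∈ P.chordSeg p :=
  midpoint_mem_openSegment _ _

theorem not_nCr_self (p : Fin n × Fin n) : ¬ P.NCr p p := fun h =>
  Set.disjoint_left.1 h (P.midpoint_mem_chordSeg p) (P.midpoint_mem_chordSeg p)

theorem mem_diagsIn_cutRegion {I : Finset (Fin n × Fin n)} {p : Fin n × Fin n} :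
    p ∈ P.diagsIn (P.cutRegion I) ↔ p ∈ P.Mdiag ∧ ∀ q ∈ I, P.NCr p q := by
  simp only [diagsIn, mem_filter, cutRegion, Set.subset_sdiff, Set.disjoint_iUnion₂_right, NCr]
  constructor
  · exact fun h => ⟨h.1, h.2.2⟩
  · exact fun h => ⟨h.1, ((mem_filter.1 h.1).2).2, h.2⟩

/-- Only meaningful when `p` crosses no member of `I`: for `p ∈ I` the midpoint is cut away and
this is `∅`. -/
def pieceOf (I : Finset (Fin n × Fin n)) (p : Fin n × Fin n) : Set (ℝ × ℝ) :=
  connectedComponentIn (P.cutRegion I) (midpoint ℝ (P.V p.1) (P.V p.2))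

variable {P}

theorem chordSeg_subset_pieceOf {I : Finset (Fin n × Fin n)} {p : Fin n × Fin n}
    (h : P.chordSeg p ⊆ P.cutRegion I) : P.chordSeg p ⊆ P.pieceOf I p :=
  (convex_openSegment _ _).isPreconnected.subset_connectedComponentIn
    (P.midpoint_mem_chordSeg p) h

theorem pieceOf_mem_pieces {I : Finset (Fin n × Fin n)} {p : Fin n × Fin n}
    (h : P.chordSeg p ⊆ P.cutRegion I) : P.pieceOf I p ∈ P.pieces I :=
  ⟨_, h (P.midpoint_mem_chordSeg p), rfl⟩

theorem nCr_of_pieceOf_ne {I : Finset (Fin n × Fin n)} {p q : Fin n × Fin n}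
    (hp : P.chordSeg p ⊆ P.cutRegion I) (hq : P.chordSeg q ⊆ P.cutRegion I)
    (hpq : P.pieceOf I p ≠ P.pieceOf I q) : P.NCr p q :=
  Set.disjoint_left.2 fun _ hxp hxq => hpq <|
    (connectedComponentIn_eq (chordSeg_subset_pieceOf hp hxp)).trans
      (connectedComponentIn_eq (chordSeg_subset_pieceOf hq hxq)).symm

theorem diagsIn_eq_filter_pieceOf {I : Finset (Fin n × Fin n)} {C : Set (ℝ × ℝ)}
    (hC : C ∈ P.pieces I) :
    P.diagsIn C = {p ∈ P.diagsIn (P.cutRegion I) | P.pieceOf I p = C} := by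
  obtain ⟨x, -, rfl⟩ := hC
  ext p
  simp only [diagsIn, mem_filter]
  constructor
  · rintro ⟨hp, hsub⟩
    exact ⟨⟨hp, hsub.trans (connectedComponentIn_subset _ _)⟩,
      (connectedComponentIn_eq (hsub (P.midpoint_mem_chordSeg p))).symm⟩
  · rintro ⟨⟨hp, hsub⟩, hpx⟩
    exact ⟨hp, hpx ▸ chordSeg_subset_pieceOf hsub⟩

variable (P)

theorem finprod_pieces_chi (I : Finset (Fin n × Fin n)) :
    ∏ᶠ C ∈ P.pieces I, P.chi (P.diagsIn C) =
      pairwiseEulerChar P.NCr (P.diagsIn (P.cutRegion I)) := by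
  set D := P.diagsIn (P.cutRegion I)
  have hD : ∀ p ∈ D, P.chordSeg p ⊆ P.cutRegion I := fun p hp => (mem_filter.1 hp).2
  have hpieces : ∀ C ∈ D.image (P.pieceOf I), C ∈ P.pieces I := by
    simp only [mem_image]
    rintro C ⟨p, hp, rfl⟩
    exact pieceOf_mem_pieces (hD p hp)
  rw [finprod_mem_eq_prod_of_subset _ (t := D.image (P.pieceOf I)) ?_ hpieces,
    pairwiseEulerChar_eq_prod_fiberwise (P.pieceOf I)
      fun p hp q hq => nCr_of_pieceOf_ne (hD p hp) (hD q hq)]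
  · refine prod_congr rfl fun C hC => ?_
    rw [chi_eq_pairwiseEulerChar, diagsIn_eq_filter_pieceOf (hpieces C hC)]
  · rintro C ⟨hC, hsupp⟩
    by_contra hCD
    have hempty : P.diagsIn C = ∅ := by
      rw [diagsIn_eq_filter_pieceOf hC, filter_eq_empty_iff]
      exact fun p hp hpC => hCD (mem_coe.2 (mem_image.2 ⟨p, hp, hpC⟩))
    exact hsupp (by dsimp only; rw [hempty, chi_eq_pairwiseEulerChar, pairwiseEulerChar_empty])

theorem pairwiseEulerChar_diagsIn_cutRegion {I : Finset (Fin n × Fin n)} (hI : I ⊆ P.Mdiag)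
    (hInc : (I : Set (Fin n × Fin n)).Pairwise P.NCr) :
    pairwiseEulerChar P.NCr (P.diagsIn (P.cutRegion I)) =
      ∑ U ∈ pairwiseSubsets P.NCr P.Mdiag with I ⊆ U, (-1) ^ #I * (-1) ^ #U := by
  have hdisj : ∀ T ⊆ P.diagsIn (P.cutRegion I), Disjoint I T := fun T hT =>
    disjoint_right.2 fun p hp hpI =>
      P.not_nCr_self p ((P.mem_diagsIn_cutRegion.1 (hT hp)).2 p hpI)
  refine sum_nbij' (fun T => I ∪ T) (fun U => U \ I) ?_ ?_ ?_ ?_ ?_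
  · intro T hT
    obtain ⟨hTD, hTnc⟩ := mem_pairwiseSubsets.1 hT
    simp only [mem_filter, mem_pairwiseSubsets, coe_union, Set.pairwise_union, subset_union_left,
      and_true]
    refine ⟨union_subset hI fun p hp => (P.mem_diagsIn_cutRegion.1 (hTD hp)).1, hInc, hTnc, ?_⟩
    intro q hq p hp _
    have hpq := (P.mem_diagsIn_cutRegion.1 (hTD hp)).2 q hq
    exact ⟨hpq.symm, hpq⟩
  · intro U hU
    rw [mem_filter, mem_pairwiseSubsets] at hU
    obtain ⟨⟨hUM, hUnc⟩, hIU⟩ := hU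
    refine mem_pairwiseSubsets.2 ⟨fun p hp => ?_, hUnc.mono (coe_subset.2 sdiff_subset)⟩
    obtain ⟨hpU, hpI⟩ := mem_sdiff.1 hp
    exact P.mem_diagsIn_cutRegion.2 ⟨hUM hpU, fun q hq =>
      hUnc hpU (hIU hq) fun h => hpI (h ▸ hq)⟩
  · exact fun T hT => union_sdiff_cancel_left (hdisj T (mem_pairwiseSubsets.1 hT).1)
  · exact fun U hU => union_sdiff_of_subset (mem_filter.1 hU).2
  · intro T hT
    rw [card_union_of_disjoint (hdisj T (mem_pairwiseSubsets.1 hT).1), pow_add, ← mul_assoc,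
      ← pow_add, Even.neg_one_pow ⟨_, rfl⟩, one_mul]

end SimplePolygon

/-- For a set `J` of pairwise non-crossing diagonals,
`χ(M_d ∖ J) = Σ_{I ⊆ J} Π_k χ(M_d(P_{I,k}))`, the product running over the
sub-polygons (pieces) into which `I` divides `P`. -/
theorem chi_sdiff_eq_sum_prod {n : ℕ} [NeZero n] (P : SimplePolygon n)
    (J : Finset (Fin n × Fin n)) (hJ : J ⊆ P.Mdiag)
    (hnc : (J : Set (Fin n × Fin n)).Pairwise P.NCr) :
    P.chi (P.Mdiag \ J) =
      ∑ I ∈ J.powerset, ∏ᶠ C ∈ P.pieces I, P.chi (P.diagsIn C) := by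
  set NC := pairwiseSubsets P.NCr P.Mdiag
  have hpieces : ∀ I ∈ J.powerset, ∏ᶠ C ∈ P.pieces I, P.chi (P.diagsIn C) =
      ∑ U ∈ NC with I ⊆ U, (-1) ^ #I * (-1) ^ #U := fun I hI => by
    have hIJ := mem_powerset.1 hI
    rw [P.finprod_pieces_chi, P.pairwiseEulerChar_diagsIn_cutRegion (hIJ.trans hJ)
      (hnc.mono (coe_subset.2 hIJ))]
  have hswap : ∀ I U, I ∈ J.powerset ∧ U ∈ {U ∈ NC | I ⊆ U} ↔
      I ∈ (U ∩ J).powerset ∧ U ∈ NC := fun I U => by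
    simp only [mem_filter, mem_powerset, subset_inter_iff]
    tauto
  rw [sum_congr rfl hpieces, sum_comm' hswap]
  calc P.chi (P.Mdiag \ J)
      = ∑ U ∈ NC with Disjoint U J, (-1) ^ #U := by
        rw [P.chi_eq_pairwiseEulerChar, pairwiseEulerChar, pairwiseSubsets_sdiff]
    _ = ∑ U ∈ NC, ∑ I ∈ (U ∩ J).powerset, (-1) ^ #I * (-1) ^ #U := by
        simp only [← sum_mul, sum_powerset_neg_one_pow_card, sum_filter,
          disjoint_iff_inter_eq_empty, ite_mul, one_mul, zero_mul]
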